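/- For the Erdős–Rényi random graph $G(n,p)$ with adjacency matrix $A$ and degrees $d_i$, the forgotten topological index $\mathcal{I}_n=\sum_{i<j} A_{ij}(d_i^2+d_j^2)$ has expectation $\mathbb{E}[\mathcal{I}_n]=n(n-1)(n-2)(n-3)p^3+3n(n-1)(n-2)p^2+n(n-1)p$. -/

import Mathlib

/-!
Summing `A i j * d i ^ 2 + A i j * d j ^ 2` over the pairs `i < j` of a symmetric matrix with zero
diagonal gives `∑ i, d i ^ 3`, so the index is the sum of the cubed degrees. Each degree is a sum of
`n - 1` independent Bernoulli(`p`) variables, and adding one such variable `X`, independent of a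
partial sum `S`, changes `𝔼[S ^ k]` by `p * 𝔼[(S + 1) ^ k - S ^ k]`. Inducting on the number of
summands gives the binomial moments `𝔼[S ^ 3] = m p + 3 m (m - 1) p ^ 2 + m (m - 1) (m - 2) p ^ 3`.
-/

open MeasureTheory ProbabilityTheory

lemma abs_sum_le_card_of_zero_or_one {ι Ω : Type*} {Y : ι → Ω → ℝ}
    (h01 : ∀ i ω, Y i ω = 0 ∨ Y i ω = 1) (s : Finset ι) (ω : Ω) :
    |∑ i ∈ s, Y i ω| ≤ s.card :=
  calc |∑ i ∈ s, Y i ω| ≤ ∑ i ∈ s, |Y i ω| := Finset.abs_sum_le_sum_abs _ _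
    _ ≤ ∑ _i ∈ s, (1 : ℝ) :=
      Finset.sum_le_sum fun i _ => by rcases h01 i ω with h | h <;> simp [h]
    _ = s.card := by simp

lemma integral_eq_measureReal_of_zero_or_one {Ω : Type*} [MeasurableSpace Ω] {μ : Measure Ω}
    {X : Ω → ℝ} (hX : Measurable X) (hX01 : ∀ ω, X ω = 0 ∨ X ω = 1) :
    ∫ ω, X ω ∂μ = μ.real {ω | X ω = 1} := by
  have hind : X = {ω | X ω = 1}.indicator 1 := funext fun ω => by
    rcases hX01 ω with h | h <;> simp [h]
  nth_rewrite 1 [hind]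
  exact integral_indicator_one (hX (measurableSet_singleton 1))

section BernoulliSum

variable {Ω ι : Type*} [MeasurableSpace Ω] {μ : Measure Ω} [IsProbabilityMeasure μ]

lemma integrable_pow_of_abs_le {S : Ω → ℝ} (hS : Measurable S) {C : ℝ} (hC : ∀ ω, |S ω| ≤ C)
    (k : ℕ) : Integrable (fun ω => S ω ^ k) μ :=
  .of_bound (hS.pow_const k).aestronglyMeasurable (C ^ k) <| ae_of_all _ fun ω => by
    simpa only [Real.norm_eq_abs, abs_pow] using pow_le_pow_left₀ (abs_nonneg _) (hC ω) k

lemma integral_quadratic {S : Ω → ℝ} (hS : Measurable S) {C : ℝ} (hC : ∀ ω, |S ω| ≤ C)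
    (a b c : ℝ) :
    ∫ ω, a * S ω ^ 2 + b * S ω + c ∂μ = a * (∫ ω, S ω ^ 2 ∂μ) + b * (∫ ω, S ω ∂μ) + c := by
  have hS2 : Integrable (fun ω => a * S ω ^ 2) μ :=
    (integrable_pow_of_abs_le hS hC 2).const_mul a
  have hS1 : Integrable (fun ω => b * S ω) μ :=
    (by simpa using integrable_pow_of_abs_le hS hC 1 : Integrable S μ).const_mul b
  rw [integral_add (f := fun ω => a * S ω ^ 2 + b * S ω) (hS2.add hS1) (integrable_const c),
    integral_add hS2 hS1, integral_const_mul, integral_const_mul]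
  simp

/-- Since `X ∈ {0, 1}`, `(S + X) ^ k = S ^ k + ((S + 1) ^ k - S ^ k) * X` pointwise. -/
lemma integral_add_pow_of_indepFun {S X : Ω → ℝ} (hS : Measurable S) {C : ℝ}
    (hC : ∀ ω, |S ω| ≤ C) (hX : Measurable X) (hX01 : ∀ ω, X ω = 0 ∨ X ω = 1)
    (hSX : IndepFun S X μ) (k : ℕ) :
    ∫ ω, (S ω + X ω) ^ k ∂μ
      = (∫ ω, S ω ^ k ∂μ) + (∫ ω, (S ω + 1) ^ k - S ω ^ k ∂μ) * ∫ ω, X ω ∂μ := by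
  set g : ℝ → ℝ := fun x => (x + 1) ^ k - x ^ k
  have hpoint : ∀ ω, (S ω + X ω) ^ k = S ω ^ k + g (S ω) * X ω := fun ω => by
    rcases hX01 ω with h | h <;> simp [g, h]
  have hg : Integrable (fun ω => g (S ω)) μ :=
    (integrable_pow_of_abs_le (hS.add_const 1) (C := C + 1)
      (fun ω => (abs_add_le _ _).trans (by simpa using hC ω)) k).sub
      (integrable_pow_of_abs_le hS hC k)
  have hgX : Integrable (fun ω => g (S ω) * X ω) μ :=
    hg.mono (by fun_prop) <| ae_of_all _ fun ω => by rcases hX01 ω with h | h <;> simp [h]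
  have hmul : ∫ ω, g (S ω) * X ω ∂μ = (∫ ω, g (S ω) ∂μ) * ∫ ω, X ω ∂μ :=
    (hSX.comp (by fun_prop : Measurable g) measurable_id).integral_mul_eq_mul_integral
      (by fun_prop) hX.aestronglyMeasurable
  simp_rw [hpoint]
  rw [integral_add (integrable_pow_of_abs_le hS hC k) hgX, hmul]

variable {Y : ι → Ω → ℝ} {p : ℝ}

lemma integrable_sum_pow_of_zero_or_one (hmeas : ∀ i, Measurable (Y i))
    (h01 : ∀ i ω, Y i ω = 0 ∨ Y i ω = 1) (s : Finset ι) (k : ℕ) :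
    Integrable (fun ω => (∑ i ∈ s, Y i ω) ^ k) μ :=
  integrable_pow_of_abs_le (by fun_prop) (abs_sum_le_card_of_zero_or_one h01 s) k

lemma integral_sum_of_zero_or_one (hmeas : ∀ i, Measurable (Y i))
    (h01 : ∀ i ω, Y i ω = 0 ∨ Y i ω = 1) (hmean : ∀ i, ∫ ω, Y i ω ∂μ = p) (s : Finset ι) :
    ∫ ω, ∑ i ∈ s, Y i ω ∂μ = s.card * p := by
  rw [integral_finsetSum s fun i _ => .of_bound (hmeas i).aestronglyMeasurable 1
    (ae_of_all _ fun ω => by rcases h01 i ω with h | h <;> simp [h])]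
  simp [hmean]

lemma integral_sum_insert_pow [DecidableEq ι] (hY : iIndepFun Y μ)
    (hmeas : ∀ i, Measurable (Y i)) (h01 : ∀ i ω, Y i ω = 0 ∨ Y i ω = 1) {s : Finset ι} {a : ι}
    (ha : a ∉ s) (k : ℕ) :
    ∫ ω, (∑ i ∈ insert a s, Y i ω) ^ k ∂μ
      = (∫ ω, (∑ i ∈ s, Y i ω) ^ k ∂μ)
        + (∫ ω, ((∑ i ∈ s, Y i ω) + 1) ^ k - (∑ i ∈ s, Y i ω) ^ k ∂μ) * ∫ ω, Y a ω ∂μ := by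
  have hind : IndepFun (fun ω => ∑ i ∈ s, Y i ω) (Y a) μ := by
    simpa only [← Finset.sum_fn] using hY.indepFun_finsetSum_of_notMem hmeas ha
  simp_rw [Finset.sum_insert ha, add_comm (Y a _)]
  exact integral_add_pow_of_indepFun (by fun_prop) (abs_sum_le_card_of_zero_or_one h01 s)
    (hmeas a) (h01 a) hind k

lemma integral_sum_sq_of_iIndepFun [DecidableEq ι] (hY : iIndepFun Y μ)
    (hmeas : ∀ i, Measurable (Y i)) (h01 : ∀ i ω, Y i ω = 0 ∨ Y i ω = 1)
    (hmean : ∀ i, ∫ ω, Y i ω ∂μ = p) (s : Finset ι) :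
    ∫ ω, (∑ i ∈ s, Y i ω) ^ 2 ∂μ = s.card * p + s.card * (s.card - 1) * p ^ 2 := by
  induction s using Finset.induction_on with
  | empty => simp
  | insert a s ha ih =>
    have hdiff : ∀ ω, ((∑ i ∈ s, Y i ω) + 1) ^ 2 - (∑ i ∈ s, Y i ω) ^ 2
        = 0 * (∑ i ∈ s, Y i ω) ^ 2 + 2 * (∑ i ∈ s, Y i ω) + 1 := fun ω => by ring
    rw [integral_sum_insert_pow hY hmeas h01 ha, ih, hmean,
      integral_congr_ae (ae_of_all _ hdiff),
      integral_quadratic (by fun_prop) (abs_sum_le_card_of_zero_or_one h01 s),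
      integral_sum_of_zero_or_one hmeas h01 hmean, Finset.card_insert_of_notMem ha]
    push_cast
    ring

lemma integral_sum_pow_three_of_iIndepFun [DecidableEq ι] (hY : iIndepFun Y μ)
    (hmeas : ∀ i, Measurable (Y i)) (h01 : ∀ i ω, Y i ω = 0 ∨ Y i ω = 1)
    (hmean : ∀ i, ∫ ω, Y i ω ∂μ = p) (s : Finset ι) :
    ∫ ω, (∑ i ∈ s, Y i ω) ^ 3 ∂μ = s.card * p + 3 * s.card * (s.card - 1) * p ^ 2
      + s.card * (s.card - 1) * (s.card - 2) * p ^ 3 := by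
  induction s using Finset.induction_on with
  | empty => simp
  | insert a s ha ih =>
    have hdiff : ∀ ω, ((∑ i ∈ s, Y i ω) + 1) ^ 3 - (∑ i ∈ s, Y i ω) ^ 3
        = 3 * (∑ i ∈ s, Y i ω) ^ 2 + 3 * (∑ i ∈ s, Y i ω) + 1 := fun ω => by ring
    rw [integral_sum_insert_pow hY hmeas h01 ha, ih, hmean,
      integral_congr_ae (ae_of_all _ hdiff),
      integral_quadratic (by fun_prop) (abs_sum_le_card_of_zero_or_one h01 s),
      integral_sum_sq_of_iIndepFun hY hmeas h01 hmean,
      integral_sum_of_zero_or_one hmeas h01 hmean, Finset.card_insert_of_notMem ha]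
    push_cast
    ring

end BernoulliSum

section Graph

variable {V : Type*} [LinearOrder V]

lemma sum_ite_lt_mul_add [Fintype V] (a : V → V → ℝ) (hsymm : ∀ i j, a i j = a j i)
    (hdiag : ∀ i, a i i = 0) (f : V → ℝ) :
    ∑ i, ∑ j, (if i < j then a i j * (f i + f j) else 0) = ∑ i, ∑ j, a i j * f i := by
  have hswap : ∑ i, ∑ j, (if i < j then a i j * f j else 0)
      = ∑ i, ∑ j, (if j < i then a i j * f i else 0) := by
    rw [Finset.sum_comm]
    simp_rw [hsymm]
  have hsplit : ∀ i j, a i j * f i = (if i < j then a i j * f i else 0)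
      + (if j < i then a i j * f i else 0) := fun i j => by
    rcases lt_trichotomy i j with h | rfl | h
    · simp [h, h.not_gt]
    · simp [hdiag]
    · simp [h, h.not_gt]
  calc ∑ i, ∑ j, (if i < j then a i j * (f i + f j) else 0)
      = ∑ i, ∑ j, (if i < j then a i j * f i else 0)
        + ∑ i, ∑ j, (if i < j then a i j * f j else 0) := by
        simp only [mul_add, ite_add_zero, Finset.sum_add_distrib]
    _ = ∑ i, ∑ j, a i j * f i := by
        rw [hswap, ← Finset.sum_add_distrib]
        exact Finset.sum_congr rfl fun i _ => by
          rw [← Finset.sum_add_distrib]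
          exact Finset.sum_congr rfl fun j _ => (hsplit i j).symm

lemma sum_ite_lt_mul_sq_add_sq [Fintype V] (a : V → V → ℝ) (hsymm : ∀ i j, a i j = a j i)
    (hdiag : ∀ i, a i i = 0) :
    ∑ i, ∑ j, (if i < j then a i j * ((∑ k, a i k) ^ 2 + (∑ k, a j k) ^ 2) else 0)
      = ∑ i, (∑ k, a i k) ^ 3 := by
  rw [sum_ite_lt_mul_add a hsymm hdiag]
  exact Finset.sum_congr rfl fun i _ => by rw [← Finset.sum_mul]; ring

def sortedPair (i j : V) (h : i ≠ j) : {e : V × V // e.1 < e.2} :=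
  ⟨(min i j, max i j), min_lt_max.2 h⟩

lemma sortedPair_injective (i : V) :
    Function.Injective fun j : {j // j ≠ i} => sortedPair i j (Ne.symm j.2) := by
  rintro ⟨j, hj⟩ ⟨k, hk⟩ h
  simp only [sortedPair, Subtype.mk.injEq, Prod.mk.injEq] at h
  rcases lt_or_gt_of_ne hj with hj | hj <;> rcases lt_or_gt_of_ne hk with hk | hk <;>
    simp_all [le_of_lt]

lemma apply_min_max {α : Type*} {A : V → V → α} (hsymm : ∀ i j, A i j = A j i) (i j : V) :
    A (min i j) (max i j) = A i j := by
  rcases le_total i j with h | h <;> simp [h, hsymm i j]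

variable {Ω : Type*} {A : V → V → Ω → ℝ}

lemma apply_eq_zero_or_one_of_ne (hsymm : ∀ i j, A i j = A j i)
    (h01 : ∀ i j, i < j → ∀ ω, A i j ω = 0 ∨ A i j ω = 1) {i j : V} (hij : i ≠ j) (ω : Ω) :
    A i j ω = 0 ∨ A i j ω = 1 := by
  simpa only [apply_min_max hsymm] using h01 _ _ (min_lt_max.2 hij) ω

variable [MeasurableSpace Ω] {μ : Measure Ω} {p : ℝ}

lemma iIndepFun_row (hsymm : ∀ i j, A i j = A j i)
    (hindep : iIndepFun (fun e : {e : V × V // e.1 < e.2} => A e.1.1 e.1.2) μ) (i : V) :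
    iIndepFun (fun j : {j // j ≠ i} => A i j) μ := by
  simpa only [sortedPair, apply_min_max hsymm] using hindep.precomp (sortedPair_injective i)

lemma integral_apply_of_ne (hp : 0 ≤ p) (hsymm : ∀ i j, A i j = A j i)
    (hmeas : ∀ i j, Measurable (A i j)) (h01 : ∀ i j, i < j → ∀ ω, A i j ω = 0 ∨ A i j ω = 1)
    (hber : ∀ i j, i < j → μ {ω | A i j ω = 1} = ENNReal.ofReal p) {i j : V} (hij : i ≠ j) :
    ∫ ω, A i j ω ∂μ = p := by
  rw [← apply_min_max hsymm, integral_eq_measureReal_of_zero_or_one (hmeas _ _)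
    (h01 _ _ (min_lt_max.2 hij)), measureReal_def, hber _ _ (min_lt_max.2 hij),
    ENNReal.toReal_ofReal hp]

lemma integral_sum_ne_pow_three [Fintype V] [IsProbabilityMeasure μ] (hp : 0 ≤ p)
    (hsymm : ∀ i j, A i j = A j i) (hmeas : ∀ i j, Measurable (A i j))
    (h01 : ∀ i j, i < j → ∀ ω, A i j ω = 0 ∨ A i j ω = 1)
    (hber : ∀ i j, i < j → μ {ω | A i j ω = 1} = ENNReal.ofReal p)
    (hindep : iIndepFun (fun e : {e : V × V // e.1 < e.2} => A e.1.1 e.1.2) μ) (i : V) :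
    ∫ ω, (∑ j : {j // j ≠ i}, A i j ω) ^ 3 ∂μ
      = (Fintype.card V - 1) * p + 3 * (Fintype.card V - 1) * (Fintype.card V - 2) * p ^ 2
        + (Fintype.card V - 1) * (Fintype.card V - 2) * (Fintype.card V - 3) * p ^ 3 := by
  rw [integral_sum_pow_three_of_iIndepFun (iIndepFun_row hsymm hindep i) (fun j => hmeas i j)
    (fun j => apply_eq_zero_or_one_of_ne hsymm h01 (Ne.symm j.2))
    (fun j => integral_apply_of_ne hp hsymm hmeas h01 hber (Ne.symm j.2))]
  have hcard : 1 ≤ Fintype.card V := Fintype.card_pos_iff.2 ⟨i⟩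
  simp only [Finset.card_univ, Fintype.card_subtype_compl, Fintype.card_unique,
    Nat.cast_sub hcard, Nat.cast_one]
  ring

end Graph

theorem stmt8 {Ω : Type*} [MeasureSpace Ω] [IsProbabilityMeasure (ℙ : Measure Ω)]
    (n : ℕ) (p : ℝ) (hp : p ∈ Set.Icc (0:ℝ) 1)
    (A : Fin n → Fin n → Ω → ℝ)
    (hAsymm : ∀ i j, A i j = A j i) (hdiag : ∀ i ω, A i i ω = 0)
    (hmeas : ∀ i j, Measurable (A i j))
    (h01 : ∀ i j, i < j → ∀ ω, A i j ω = 0 ∨ A i j ω = 1)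
    (hber : ∀ i j, i < j → ℙ {ω | A i j ω = 1} = ENNReal.ofReal p)
    (hindep : iIndepFun
      (fun e : {e : Fin n × Fin n // e.1 < e.2} => A e.1.1 e.1.2) ℙ) :
    let d : Fin n → Ω → ℝ := fun i ω => ∑ k, if k ≠ i then A i k ω else 0
    (∫ ω, (∑ i, ∑ j, if i < j then A i j ω * ((d i ω)^2 + (d j ω)^2) else 0) ∂ℙ)
      = (n:ℝ) * ((n:ℝ)-1) * ((n:ℝ)-2) * ((n:ℝ)-3) * p^3
        + 3 * (n:ℝ) * ((n:ℝ)-1) * ((n:ℝ)-2) * p^2 + (n:ℝ) * ((n:ℝ)-1) * p := by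
  intro d
  have hd_sum : ∀ i ω, d i ω = ∑ k, A i k ω := fun i ω =>
    Finset.sum_congr rfl fun k _ => by by_cases h : k = i <;> simp [h, hdiag]
  have hd_row : ∀ i ω, d i ω = ∑ j : {j // j ≠ i}, A i j ω := fun i ω => by
    rw [← Finset.sum_subtype (Finset.univ.filter (· ≠ i)) (by simp) fun j => A i j ω,
      Finset.sum_filter]
  have hcubes : ∀ ω, (∑ i, ∑ j, if i < j then A i j ω * ((d i ω)^2 + (d j ω)^2) else 0)
      = ∑ i, d i ω ^ 3 := fun ω => by
    simp only [hd_sum]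
    exact sum_ite_lt_mul_sq_add_sq (fun i j => A i j ω) (fun i j => by rw [hAsymm]) (hdiag · ω)
  simp_rw [integral_congr_ae (ae_of_all _ hcubes), hd_row]
  rw [integral_finsetSum _ fun i _ => integrable_sum_pow_of_zero_or_one
    (Y := fun j : {j // j ≠ i} => A i j) (fun j => hmeas i j)
    (fun j => apply_eq_zero_or_one_of_ne hAsymm h01 (Ne.symm j.2)) _ 3]
  simp only [integral_sum_ne_pow_three hp.1 hAsymm hmeas h01 hber hindep, Finset.sum_const,
    Finset.card_univ, Fintype.card_fin, nsmul_eq_mul]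
  ring
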